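/- In the setting of the induced action (G countable acting on a uniquely arcwise connected continuum X, p ∈ X, T = [Gp] = ⋃_n T_n with the convex metric d of the standing construction, and (T̄, d) the completion of (T, d)), for every g ∈ G the unique continuous extension ḡ : (T̄, d) → (T̄, d) of g is a homeomorphism; in particular ḡ is injective, and g ↦ ḡ defines an action of G on the dendrite (T̄, d) by homeomorphisms. -/

import Mathlib

/-- `A` is an arc in `X` joining `x` and `y`: the image of a continuous injection
from `[0,1]` sending `0` to `x` and `1` to `y`. -/
def IsArcBetween {X : Type*} [TopologicalSpace X] (A : Set X) (x y : X) : Prop :=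
  ∃ f : unitInterval → X, Continuous f ∧ Function.Injective f ∧
    f 0 = x ∧ f 1 = y ∧ Set.range f = A

/-- `A` is an arc in `X` (a subspace homeomorphic to `[0,1]`). -/
def IsArc {X : Type*} [TopologicalSpace X] (A : Set X) : Prop :=
  ∃ x y, IsArcBetween A x y

/-- `X` is uniquely arcwise connected: any two distinct points are joined by a unique arc. -/
def UniquelyArcwiseConnected (X : Type*) [TopologicalSpace X] : Prop :=
  ∀ x y : X, x ≠ y → ∃! A : Set X, IsArcBetween A x y

/-- A dendrite: a (metrizable) continuum which is locally connected and uniquely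
arcwise connected. -/
def IsDendrite (X : Type*) [TopologicalSpace X] : Prop :=
  Nonempty X ∧ CompactSpace X ∧ ConnectedSpace X ∧
    TopologicalSpace.MetrizableSpace X ∧ LocallyConnectedSpace X ∧
    UniquelyArcwiseConnected X

/-- A subset `Y` of `X` is a tree: it is a dendrite (with the subspace topology)
which is the union of finitely many arcs. -/
def IsTree {X : Type*} [TopologicalSpace X] (Y : Set X) : Prop :=
  IsDendrite Y ∧ ∃ (n : ℕ) (A : Fin n → Set X), (∀ i, IsArc (A i)) ∧ Y = ⋃ i, A i

/-- A subset `S` of `X` is arcwise connected: any two distinct points of `S`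
are joined by an arc contained in `S`. -/
def ArcwiseConnectedSet {X : Type*} [TopologicalSpace X] (S : Set X) : Prop :=
  ∀ x ∈ S, ∀ y ∈ S, x ≠ y → ∃ A : Set X, IsArcBetween A x y ∧ A ⊆ S

/-- The convex hull `[S]` of `S`: the intersection of all arcwise connected
subsets of `X` containing `S`. -/
def arcHull {X : Type*} [TopologicalSpace X] (S : Set X) : Set X :=
  ⋂₀ {C : Set X | S ⊆ C ∧ ArcwiseConnectedSet C}

/-- The arc `[x, y]` in a uniquely arcwise connected space (`{x}` if `x = y`). -/
noncomputable def arcOf {X : Type*} [TopologicalSpace X]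
    (hX : UniquelyArcwiseConnected X) (x y : X) : Set X :=
  letI : Decidable (x = y) := Classical.dec _
  if h : x = y then {x} else (hX x y h).choose

/-- The standing construction: in a uniquely arcwise connected continuum `X`, a strictly
increasing sequence of trees `T n = I 0 ∪ ... ∪ I n` built from arcs `I i` meeting
pairwise in at most a point, together with homeomorphisms `h i : I i → [0,1]`. -/
structure StandingConstruction (X : Type*) [MetricSpace X] where
  /-- `X` is uniquely arcwise connected. -/
  huac : UniquelyArcwiseConnected X
  /-- the arcs `I i` -/
  I : ℕ → Set X
  arc_I : ∀ i, IsArc (I i)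
  /-- distinct arcs meet in at most one point -/
  inter_I : ∀ i j, i ≠ j → (I i ∩ I j).Subsingleton
  /-- each partial union `T n = ⋃_{i ≤ n} I i` is a tree -/
  tree_T : ∀ n : ℕ, IsTree (⋃ i ≤ n, I i)
  /-- the sequence of trees is strictly increasing -/
  strict_T : ∀ n : ℕ, (⋃ i ≤ n, I i) ⊂ ⋃ i ≤ n + 1, I i
  /-- the homeomorphisms `h i : I i → [0,1]` -/
  h : ℕ → X → ℝ
  h_cont : ∀ i, ContinuousOn (h i) (I i)
  h_inj : ∀ i, Set.InjOn (h i) (I i)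
  h_image : ∀ i, h i '' I i = Set.Icc (0 : ℝ) 1

/-- The tree `T n` of the standing construction. -/
def StandingConstruction.Tn {X : Type*} [MetricSpace X]
    (sc : StandingConstruction X) (n : ℕ) : Set X :=
  ⋃ i ≤ n, sc.I i

/-- The set `T = ⋃ n T n` of the standing construction. -/
def StandingConstruction.T {X : Type*} [MetricSpace X]
    (sc : StandingConstruction X) : Set X :=
  ⋃ i, sc.I i

/-- The metric `d(x,y) = ∑ i 2^{-(i+1)} l(h i ([x,y] ∩ I i))` of the standing
construction, where `l` is the length (diameter) of a subinterval of `[0,1]`. -/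
noncomputable def StandingConstruction.d {X : Type*} [MetricSpace X]
    (sc : StandingConstruction X) (x y : X) : ℝ :=
  ∑' i : ℕ, (2 : ℝ)⁻¹ ^ (i + 1) *
    Metric.diam (sc.h i '' (arcOf sc.huac x y ∩ sc.I i))

/-!
A continuous map on `T̄` is determined by its values on the dense image of `T`, so
`g ↦ ḡ` inherits the action laws from the action of `G` on the invariant set `T`;
in particular `ḡ⁻¹` is a continuous inverse of `ḡ`.
-/

section ContinuousExtension

variable {α Y : Type*} [TopologicalSpace Y] [T2Space Y] {ι : α → Y}

theorem DenseRange.extension_one_eq_id {M : Type*} [Monoid M] [MulAction M α]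
    (hι : DenseRange ι) {F : M → Y → Y} (hF : ∀ m, Continuous (F m))
    (hFι : ∀ m a, F m (ι a) = ι (m • a)) : F 1 = id :=
  hι.equalizer (hF 1) continuous_id <| funext fun a => by simp [hFι]

theorem DenseRange.extension_mul_eq_comp {M : Type*} [Monoid M] [MulAction M α]
    (hι : DenseRange ι) {F : M → Y → Y} (hF : ∀ m, Continuous (F m))
    (hFι : ∀ m a, F m (ι a) = ι (m • a)) (m n : M) : F (m * n) = F m ∘ F n :=
  hι.equalizer (hF _) ((hF m).comp (hF n)) <| funext fun a => by simp [hFι, mul_smul]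

theorem DenseRange.extension_comp_extension_inv {G : Type*} [Group G] [MulAction G α]
    (hι : DenseRange ι) {F : G → Y → Y} (hF : ∀ g, Continuous (F g))
    (hFι : ∀ g a, F g (ι a) = ι (g • a)) (g : G) : F g ∘ F g⁻¹ = id := by
  rw [← hι.extension_mul_eq_comp hF hFι, mul_inv_cancel, hι.extension_one_eq_id hF hFι]

def DenseRange.extensionHomeomorph {G : Type*} [Group G] [MulAction G α]
    (hι : DenseRange ι) {F : G → Y → Y} (hF : ∀ g, Continuous (F g))
    (hFι : ∀ g a, F g (ι a) = ι (g • a)) (g : G) : Y ≃ₜ Y where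
  toFun := F g
  invFun := F g⁻¹
  left_inv y := by simpa using congrFun (hι.extension_comp_extension_inv hF hFι g⁻¹) y
  right_inv := congrFun <| hι.extension_comp_extension_inv hF hFι g
  continuous_toFun := hF g
  continuous_invFun := hF g⁻¹

end ContinuousExtension

theorem induced_action_extensions_are_homeomorphisms
    {G X Y : Type*} [Group G] [MetricSpace X] [MulAction G X]
    [MetricSpace Y]
    (sc : StandingConstruction X)
    (hinv : ∀ g : G, ∀ x ∈ sc.T, g • x ∈ sc.T)
    (ι : sc.T → Y)
    (hdense : DenseRange ι)
    (gbar : G → Y → Y)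
    (hgc : ∀ g : G, Continuous (gbar g))
    (hext : ∀ (g : G) (x : sc.T), gbar g (ι x) = ι ⟨g • (x : X), hinv g x x.2⟩) :
    (∀ g : G, ∃ H : Y ≃ₜ Y, ⇑H = gbar g) ∧
    (∀ g : G, Function.Injective (gbar g)) ∧
    gbar 1 = id ∧ (∀ g g' : G, gbar (g * g') = gbar g ∘ gbar g') := by
  let _ : MulAction G sc.T :=
    SubMulAction.mulAction (⟨sc.T, fun g {x} hx => hinv g x hx⟩ : SubMulAction G X)
  have hext' : ∀ (g : G) (x : sc.T), gbar g (ι x) = ι (g • x) := hext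
  exact ⟨fun g => ⟨hdense.extensionHomeomorph hgc hext' g, rfl⟩,
    fun g => (hdense.extensionHomeomorph hgc hext' g).injective,
    hdense.extension_one_eq_id hgc hext', hdense.extension_mul_eq_comp hgc hext'⟩
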